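/- arXiv:1809.09923 — 3 statements merged into one kernel-verified Lean document; each statement's English description precedes it below -/
import Mathlib

section
/- Let ν be a compactly supported Borel probability measure on ℂ, let 1 < q < ∞ and C > 0. Then the set F = {z ∈ S : the projection P_z ν is absolutely continuous with density in L^q(ℝ) of L^q-norm at most C} is a closed subset of the unit circle S. -/
/-!
By duality, `P_z ν` has a density of `L^q`-norm at most `C` exactly when
`∫ f d(P_z ν) ≤ C ‖f‖_{q'}` for every nonnegative continuous compactly supported `f`, where `q'` is
the conjugate exponent. One direction is Hölder's inequality. Conversely, the bound extends by
density to nonnegative `f ∈ L^{q'}(P_z ν + λ)`; testing indicators of Lebesgue-null sets gives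
absolute continuity, and testing `min(g, t)^(q-1)` for the Radon–Nikodym derivative `g` gives
`‖min(g, t)‖_q ≤ C`, hence `‖g‖_q ≤ C` by monotone convergence. For a fixed test function `f`,
`z ↦ ∫ f(P_z w) dν(w)` is continuous by dominated convergence, so the set in question is an
intersection of closed sets.
-/

open MeasureTheory
open scoped ENNReal

namespace ENNReal

theorem le_of_forall_ne_zero_le_add_mul {a b c : ℝ≥0∞} (hc : c ≠ ∞)
    (h : ∀ δ : ℝ≥0∞, δ ≠ 0 → a ≤ b + c * δ) : a ≤ b := by
  refine le_of_forall_pos_le_add fun ε hε _ => (h (ε / (c + 1)) ?_).trans ?_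
  · simp [div_eq_zero_iff, hε.ne', hc]
  · gcongr
    calc c * (ε / (c + 1)) ≤ (c + 1) * (ε / (c + 1)) := by gcongr; exact le_self_add
      _ ≤ ε := mul_div_le

theorem le_rpow_of_le_mul_rpow {a c : ℝ≥0∞} {p q : ℝ} (hpq : p.HolderConjugate q)
    (ha : a ≠ ∞) (h : a ≤ c * a ^ (1 / p)) : a ≤ c ^ q := by
  rcases eq_or_ne a 0 with rfl | ha0
  · exact zero_le
  have hsplit : a = a ^ (1 / p) * a ^ (1 / q) := by
    rw [← rpow_add _ _ ha0 ha, one_div, one_div, hpq.inv_add_inv_eq_one, rpow_one]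
  have hroot : a ^ (1 / q) ≤ c := by
    refine (ENNReal.mul_le_mul_iff_right (a := a ^ (1 / p)) ?_ ?_).1 ?_
    · exact (rpow_pos (pos_iff_ne_zero.2 ha0) ha).ne'
    · exact rpow_ne_top_of_nonneg (by simp [hpq.nonneg]) ha
    · rw [← hsplit, mul_comm]; exact h
  calc a = (a ^ (1 / q)) ^ q := by rw [← rpow_mul, one_div_mul_cancel hpq.symm.ne_zero, rpow_one]
    _ ≤ c ^ q := rpow_le_rpow hroot hpq.symm.nonneg

theorem rpow_eq_mul_rpow_sub_one {q : ℝ} (hq : 1 ≤ q) (a : ℝ≥0∞) : a ^ q = a * a ^ (q - 1) := by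
  conv_lhs => rw [← add_sub_cancel 1 q]
  rw [rpow_add_of_nonneg _ _ zero_le_one (sub_nonneg.2 hq), rpow_one]

end ENNReal

namespace MeasureTheory

variable {α : Type*} [MeasurableSpace α]

section AddMeasure

variable {E : Type*} [NormedAddCommGroup E] {μ ν : Measure α} {p : ℝ≥0∞}

theorem MemLp.add_measure (hp0 : p ≠ 0) (hp : p ≠ ∞) {f : α → E} (hμ : MemLp f p μ)
    (hν : MemLp f p ν) : MemLp f p (μ + ν) := by
  have hf : AEStronglyMeasurable f (μ + ν) :=
    aestronglyMeasurable_add_measure_iff.2 ⟨hμ.1, hν.1⟩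
  rw [← integrable_norm_rpow_iff hf hp0 hp, integrable_add_measure]
  exact ⟨(integrable_norm_rpow_iff hμ.1 hp0 hp).2 hμ, (integrable_norm_rpow_iff hν.1 hp0 hp).2 hν⟩

instance Measure.isLocallyFiniteMeasure_add [TopologicalSpace α] [IsLocallyFiniteMeasure μ]
    [IsLocallyFiniteMeasure ν] : IsLocallyFiniteMeasure (μ + ν) := by
  refine ⟨fun x => ?_⟩
  obtain ⟨s, hs, hμs⟩ := μ.finiteAt_nhds x
  obtain ⟨t, ht, hνt⟩ := ν.finiteAt_nhds x
  exact ⟨s ∩ t, Filter.inter_mem hs ht, ENNReal.add_lt_top.2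
    ⟨(measure_mono Set.inter_subset_left).trans_lt hμs,
      (measure_mono Set.inter_subset_right).trans_lt hνt⟩⟩

end AddMeasure

theorem eLpNorm_ofReal_eq_lintegral_rpow {μ : Measure α} {f : α → ℝ} (hf : ∀ x, 0 ≤ f x)
    {p : ℝ} (hp : 0 < p) :
    eLpNorm f (ENNReal.ofReal p) μ = (∫⁻ x, ENNReal.ofReal (f x) ^ p ∂μ) ^ (1 / p) := by
  rw [eLpNorm_eq_lintegral_rpow_enorm_toReal (by simpa using hp) ENNReal.ofReal_ne_top,
    ENNReal.toReal_ofReal hp.le]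
  simp_rw [Real.enorm_eq_ofReal (hf _)]

def HasLpDensity (μ ρ : Measure α) (q C : ℝ) : Prop :=
  ∃ g : α → ℝ, (∀ x, 0 ≤ g x) ∧ MemLp g (ENNReal.ofReal q) ρ ∧
    μ = ρ.withDensity (fun x => ENNReal.ofReal (g x)) ∧
    eLpNorm g (ENNReal.ofReal q) ρ ≤ ENNReal.ofReal C

def TestingBound [TopologicalSpace α] (μ ρ : Measure α) (p C : ℝ) : Prop :=
  ∀ f : α → ℝ, Continuous f → HasCompactSupport f → (∀ x, 0 ≤ f x) →
    ∫⁻ x, ENNReal.ofReal (f x) ∂μ ≤ ENNReal.ofReal C * eLpNorm f (ENNReal.ofReal p) ρ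

variable {μ ρ : Measure α} {p q C : ℝ}

theorem HasLpDensity.testingBound [TopologicalSpace α] [OpensMeasurableSpace α]
    (hpq : p.HolderConjugate q) (h : HasLpDensity μ ρ q C) : TestingBound μ ρ p C := by
  obtain ⟨g, hg0, hg, rfl, hgC⟩ := h
  intro f hf _ hf0
  have hgm : AEMeasurable (fun x => ENNReal.ofReal (g x)) ρ :=
    hg.aestronglyMeasurable.aemeasurable.ennreal_ofReal
  have hfm : AEMeasurable (fun x => ENNReal.ofReal (f x)) ρ :=
    hf.measurable.ennreal_ofReal.aemeasurable
  rw [lintegral_withDensity_eq_lintegral_mul₀ hgm hfm, mul_comm]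
  calc ∫⁻ x, ((fun x => ENNReal.ofReal (f x)) * fun x => ENNReal.ofReal (g x)) x ∂ρ
      ≤ eLpNorm f (ENNReal.ofReal p) ρ * eLpNorm g (ENNReal.ofReal q) ρ := by
        rw [eLpNorm_ofReal_eq_lintegral_rpow hf0 hpq.pos,
          eLpNorm_ofReal_eq_lintegral_rpow hg0 hpq.symm.pos]
        exact ENNReal.lintegral_mul_le_Lp_mul_Lq ρ hpq hfm hgm
    _ ≤ eLpNorm f (ENNReal.ofReal p) ρ * ENNReal.ofReal C := by gcongr
    _ = ENNReal.ofReal C * eLpNorm f (ENNReal.ofReal p) ρ := mul_comm _ _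

theorem exists_continuous_nonneg_hasCompactSupport_eLpNorm_sub_le [TopologicalSpace α]
    [NormalSpace α] [R1Space α] [WeaklyLocallyCompactSpace α] [BorelSpace α] [μ.Regular]
    {r : ℝ≥0∞} (hr : r ≠ ∞) {φ : α → ℝ} (hφ0 : ∀ x, 0 ≤ φ x) (hφ : MemLp φ r μ)
    {δ : ℝ≥0∞} (hδ : δ ≠ 0) :
    ∃ f : α → ℝ, Continuous f ∧ HasCompactSupport f ∧ (∀ x, 0 ≤ f x) ∧
      eLpNorm (φ - f) r μ ≤ δ := by
  obtain ⟨f, hfc, hf, hfcont, -⟩ := hφ.exists_hasCompactSupport_eLpNorm_sub_le hr hδ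
  refine ⟨fun x => max (f x) 0, hfcont.max continuous_const,
    hfc.comp_left (g := fun y => max y 0) (max_self 0), fun x => le_max_right _ _,
    (eLpNorm_mono fun x => ?_).trans hf⟩
  simp only [Pi.sub_apply, Real.norm_eq_abs]
  rcases le_total 0 (f x) with hfx | hfx
  · rw [max_eq_left hfx]
  · rw [max_eq_right hfx, sub_zero, abs_of_nonneg (hφ0 x)]
    exact (le_abs_self _).trans' (by linarith)

theorem lintegral_min_rnDeriv_rpow_ne_top [IsFiniteMeasure μ] (hq : 1 ≤ q) {t : ℝ≥0∞} (ht : t ≠ ∞) : ∫⁻ x, min (μ.rnDeriv ρ x) t ^ q ∂ρ ≠ ∞ := by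
  have hq1 : 0 ≤ q - 1 := sub_nonneg.2 hq
  refine ne_top_of_le_ne_top (b := μ Set.univ * t ^ (q - 1)) ?_ ?_
  · exact ENNReal.mul_ne_top (measure_ne_top μ _) (ENNReal.rpow_ne_top_of_nonneg hq1 ht)
  calc ∫⁻ x, min (μ.rnDeriv ρ x) t ^ q ∂ρ ≤ ∫⁻ x, μ.rnDeriv ρ x * t ^ (q - 1) ∂ρ :=
        lintegral_mono fun x => by
          rw [ENNReal.rpow_eq_mul_rpow_sub_one hq]
          exact mul_le_mul' (min_le_left _ _) (ENNReal.rpow_le_rpow (min_le_right _ _) hq1)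
    _ = (∫⁻ x, μ.rnDeriv ρ x ∂ρ) * t ^ (q - 1) := lintegral_mul_const _ (μ.measurable_rnDeriv ρ)
    _ ≤ μ Set.univ * t ^ (q - 1) := by gcongr; exact Measure.lintegral_rnDeriv_le

section LocallyCompact

variable [TopologicalSpace α] [T2Space α] [LocallyCompactSpace α] [SecondCountableTopology α]
  [BorelSpace α] [IsFiniteMeasure μ] [IsLocallyFiniteMeasure ρ]

-- Approximating in `L^p(μ + ρ)` controls the error in `L^p(μ)` and in `L^p(ρ)` at once.
theorem TestingBound.lintegral_le_of_memLp (hp : 1 ≤ p) (h : TestingBound μ ρ p C) {φ : α → ℝ}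
    (hφ0 : ∀ x, 0 ≤ φ x) (hφ : MemLp φ (ENNReal.ofReal p) (μ + ρ)) :
    ∫⁻ x, ENNReal.ofReal (φ x) ∂μ ≤ ENNReal.ofReal C * eLpNorm φ (ENNReal.ofReal p) ρ := by
  set r := ENNReal.ofReal p
  have hr : 1 ≤ r := ENNReal.one_le_ofReal.2 hp
  set K := μ Set.univ ^ (1 - 1 / p)
  have hK : K ≠ ∞ := ENNReal.rpow_ne_top_of_nonneg
    (sub_nonneg.2 ((div_le_one (by linarith)).2 hp)) (measure_ne_top μ _)
  refine ENNReal.le_of_forall_ne_zero_le_add_mul (c := ENNReal.ofReal C + K)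
    (ENNReal.add_ne_top.2 ⟨ENNReal.ofReal_ne_top, hK⟩) fun δ hδ => ?_
  obtain ⟨f, hf, hfc, hf0, hfδ⟩ :=
    exists_continuous_nonneg_hasCompactSupport_eLpNorm_sub_le ENNReal.ofReal_ne_top hφ0 hφ hδ
  have hφμ := hφ.left_of_add_measure.1
  have hφρ := hφ.right_of_add_measure.1
  have hL1 : eLpNorm (φ - f) 1 μ ≤ δ * K := by
    have := eLpNorm_le_eLpNorm_mul_rpow_measure_univ hr (hφμ.sub hf.aestronglyMeasurable)
    rw [ENNReal.toReal_one, ENNReal.toReal_ofReal (by linarith), div_one] at this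
    exact this.trans (by gcongr; exact (eLpNorm_le_add_measure_right _ _ _).trans hfδ)
  have hfρ : eLpNorm f r ρ ≤ eLpNorm φ r ρ + δ := calc
    eLpNorm f r ρ = eLpNorm (φ - (φ - f)) r ρ := by rw [sub_sub_cancel]
    _ ≤ eLpNorm φ r ρ + eLpNorm (φ - f) r ρ :=
      eLpNorm_sub_le hφρ (hφρ.sub hf.aestronglyMeasurable) hr
    _ ≤ eLpNorm φ r ρ + δ := by gcongr; exact (eLpNorm_le_add_measure_left _ _ _).trans hfδ
  calc ∫⁻ x, ENNReal.ofReal (φ x) ∂μ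
      ≤ ∫⁻ x, ENNReal.ofReal (f x) + ‖(φ - f) x‖ₑ ∂μ := lintegral_mono fun x => by
        rw [show φ x = f x + (φ - f) x by simp]
        exact ENNReal.ofReal_add_le.trans (by gcongr; exact Real.ofReal_le_enorm _)
    _ = ∫⁻ x, ENNReal.ofReal (f x) ∂μ + eLpNorm (φ - f) 1 μ := by
      rw [lintegral_add_left hf.measurable.ennreal_ofReal, eLpNorm_one_eq_lintegral_enorm]
    _ ≤ ENNReal.ofReal C * (eLpNorm φ r ρ + δ) + δ * K := by
      gcongr
      exact (h f hf hfc hf0).trans (by gcongr)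
    _ = ENNReal.ofReal C * eLpNorm φ r ρ + (ENNReal.ofReal C + K) * δ := by ring

theorem TestingBound.absolutelyContinuous (hp : 1 ≤ p) (h : TestingBound μ ρ p C) : μ ≪ ρ := by
  refine Measure.AbsolutelyContinuous.mk fun s hs hs0 => ?_
  have hφ : MemLp (s.indicator fun _ => (1 : ℝ)) (ENNReal.ofReal p) (μ + ρ) :=
    memLp_indicator_const _ hs 1 (Or.inr (by simp [hs0, measure_ne_top]))
  have hφρ : eLpNorm (s.indicator fun _ => (1 : ℝ)) (ENNReal.ofReal p) ρ = 0 := by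
    rw [eLpNorm_congr_ae (g := 0) ?_, eLpNorm_zero]
    filter_upwards [measure_eq_zero_iff_ae_notMem.1 hs0] with x hx
    exact Set.indicator_of_notMem hx _
  have hμs : ∫⁻ x, ENNReal.ofReal (s.indicator (fun _ => (1 : ℝ)) x) ∂μ = μ s := by
    rw [← lintegral_indicator_one hs]
    congr with x
    by_cases hx : x ∈ s <;> simp [hx]
  simpa [hμs, hφρ] using
    h.lintegral_le_of_memLp hp (Set.indicator_nonneg fun _ _ => zero_le_one) hφ

theorem TestingBound.lintegral_min_rnDeriv_rpow_le (hpq : p.HolderConjugate q)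
    (h : TestingBound μ ρ p C) {t : ℝ≥0∞} (ht : t ≠ ∞) :
    ∫⁻ x, min (μ.rnDeriv ρ x) t ^ q ∂ρ ≤ ENNReal.ofReal C ^ q := by
  set m := fun x => min (μ.rnDeriv ρ x) t
  have hm : Measurable m := (μ.measurable_rnDeriv ρ).min measurable_const
  have hq1 : 0 ≤ q - 1 := by linarith [hpq.symm.lt]
  have hmt : ∀ x, m x ^ (q - 1) ≤ t ^ (q - 1) := fun x =>
    ENNReal.rpow_le_rpow (min_le_right _ _) hq1
  set A := ∫⁻ x, m x ^ q ∂ρ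
  have hA : A ≠ ∞ := lintegral_min_rnDeriv_rpow_ne_top hpq.symm.lt.le ht
  set φ := fun x => (m x ^ (q - 1)).toReal
  have hφ : ∀ x, ENNReal.ofReal (φ x) = m x ^ (q - 1) := fun x =>
    ENNReal.ofReal_toReal ((hmt x).trans_lt (ENNReal.rpow_lt_top_of_nonneg hq1 ht)).ne
  have hφm : Measurable φ := (hm.pow_const _).ennreal_toReal
  have hφρ : eLpNorm φ (ENNReal.ofReal p) ρ = A ^ (1 / p) := by
    rw [eLpNorm_ofReal_eq_lintegral_rpow (fun _ => ENNReal.toReal_nonneg) hpq.pos]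
    congr 1
    exact lintegral_congr fun x => by rw [hφ x, ← ENNReal.rpow_mul, hpq.symm.sub_one_mul_conj]
  have hφmem : MemLp φ (ENNReal.ofReal p) (μ + ρ) := by
    refine MemLp.add_measure (by simpa using hpq.pos) ENNReal.ofReal_ne_top ?_
      ⟨hφm.aestronglyMeasurable, ?_⟩
    · refine MemLp.of_bound hφm.aestronglyMeasurable (t ^ (q - 1)).toReal (ae_of_all _ fun x => ?_)
      rw [Real.norm_of_nonneg ENNReal.toReal_nonneg]
      exact ENNReal.toReal_mono (ENNReal.rpow_ne_top_of_nonneg hq1 ht) (hmt x)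
    · rw [hφρ]
      exact ENNReal.rpow_lt_top_of_nonneg (by simp [hpq.nonneg]) hA
  have hAφ : A ≤ ∫⁻ x, ENNReal.ofReal (φ x) ∂μ := by
    conv_rhs => rw [← μ.withDensity_rnDeriv_eq ρ (h.absolutelyContinuous hpq.lt.le)]
    rw [lintegral_withDensity_eq_lintegral_mul _ (μ.measurable_rnDeriv ρ) hφm.ennreal_ofReal]
    exact lintegral_mono fun x => by
      rw [ENNReal.rpow_eq_mul_rpow_sub_one hpq.symm.lt.le, Pi.mul_apply, hφ]
      gcongr
      exact min_le_left _ _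
  refine ENNReal.le_rpow_of_le_mul_rpow hpq hA ?_
  calc A ≤ ∫⁻ x, ENNReal.ofReal (φ x) ∂μ := hAφ
    _ ≤ ENNReal.ofReal C * eLpNorm φ (ENNReal.ofReal p) ρ :=
      h.lintegral_le_of_memLp hpq.lt.le (fun _ => ENNReal.toReal_nonneg) hφmem
    _ = ENNReal.ofReal C * A ^ (1 / p) := by rw [hφρ]

theorem TestingBound.lintegral_rnDeriv_rpow_le (hpq : p.HolderConjugate q)
    (h : TestingBound μ ρ p C) : ∫⁻ x, μ.rnDeriv ρ x ^ q ∂ρ ≤ ENNReal.ofReal C ^ q := by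
  have hsup : ∀ x, ⨆ n : ℕ, min (μ.rnDeriv ρ x) n ^ q = μ.rnDeriv ρ x ^ q := fun x => by
    rw [← Monotone.map_iSup_of_continuousAt (f := fun a : ℝ≥0∞ => a ^ q)
      ENNReal.continuous_rpow_const.continuousAt
      (fun a b hab => ENNReal.rpow_le_rpow hab hpq.symm.nonneg)
      (ENNReal.zero_rpow_of_pos hpq.symm.pos)]
    simp only [← inf_iSup_eq, ENNReal.iSup_natCast]
    simp
  calc ∫⁻ x, μ.rnDeriv ρ x ^ q ∂ρ = ⨆ n : ℕ, ∫⁻ x, min (μ.rnDeriv ρ x) n ^ q ∂ρ := by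
        simp_rw [← hsup]
        refine lintegral_iSup
          (fun n => ((μ.measurable_rnDeriv ρ).min measurable_const).pow_const _)
          fun m n hmn x => ENNReal.rpow_le_rpow ?_ hpq.symm.nonneg
        exact min_le_min_left _ (Nat.cast_le.2 hmn)
    _ ≤ ENNReal.ofReal C ^ q :=
        iSup_le fun n => h.lintegral_min_rnDeriv_rpow_le hpq (ENNReal.natCast_ne_top n)

theorem TestingBound.hasLpDensity (hpq : p.HolderConjugate q) (h : TestingBound μ ρ p C) :
    HasLpDensity μ ρ q C := by
  set g := fun x => (μ.rnDeriv ρ x).toReal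
  have hg : (fun x => ENNReal.ofReal (g x)) =ᵐ[ρ] μ.rnDeriv ρ := by
    filter_upwards [μ.rnDeriv_lt_top ρ] with x hx using ENNReal.ofReal_toReal hx.ne
  have hgC : eLpNorm g (ENNReal.ofReal q) ρ ≤ ENNReal.ofReal C := by
    rw [eLpNorm_ofReal_eq_lintegral_rpow (fun _ => ENNReal.toReal_nonneg) hpq.symm.pos,
      lintegral_congr_ae (hg.mono fun x hx => congrArg (· ^ q) hx)]
    calc (∫⁻ x, μ.rnDeriv ρ x ^ q ∂ρ) ^ (1 / q) ≤ (ENNReal.ofReal C ^ q) ^ (1 / q) :=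
          ENNReal.rpow_le_rpow (h.lintegral_rnDeriv_rpow_le hpq) (by simp [hpq.symm.nonneg])
      _ = ENNReal.ofReal C := by
          rw [← ENNReal.rpow_mul, mul_one_div_cancel hpq.symm.ne_zero, ENNReal.rpow_one]
  refine ⟨g, fun _ => ENNReal.toReal_nonneg,
    ⟨(μ.measurable_rnDeriv ρ).ennreal_toReal.aestronglyMeasurable,
      hgC.trans_lt ENNReal.ofReal_lt_top⟩, ?_, hgC⟩
  rw [withDensity_congr_ae hg, μ.withDensity_rnDeriv_eq ρ (h.absolutelyContinuous hpq.lt.le)]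

theorem hasLpDensity_iff_testingBound (hpq : p.HolderConjugate q) :
    HasLpDensity μ ρ q C ↔ TestingBound μ ρ p C :=
  ⟨HasLpDensity.testingBound hpq, TestingBound.hasLpDensity hpq⟩

end LocallyCompact

section Pushforward

variable {X Y : Type*} [TopologicalSpace X] [FirstCountableTopology X] [MeasurableSpace Y]
  [TopologicalSpace α] [OpensMeasurableSpace α] (ν : Measure Y) [IsFiniteMeasure ν]
  {P : X → Y → α}

theorem continuous_integral_comp_of_norm_le (hPm : ∀ x, Measurable (P x))
    (hPc : ∀ y, Continuous fun x => P x y) {f : α → ℝ} (hf : Continuous f) {M : ℝ}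
    (hM : ∀ a, ‖f a‖ ≤ M) : Continuous fun x => ∫ y, f (P x y) ∂ν :=
  continuous_of_dominated (fun x => (hf.measurable.comp (hPm x)).aestronglyMeasurable)
    (fun _ => ae_of_all _ fun _ => hM _) (integrable_const M)
    (ae_of_all _ fun y => hf.comp (hPc y))

theorem isClosed_setOf_testingBound_map (hPm : ∀ x, Measurable (P x))
    (hPc : ∀ y, Continuous fun x => P x y) (ρ : Measure α) (p C : ℝ) :
    IsClosed {x | TestingBound (ν.map (P x)) ρ p C} := by
  simp only [TestingBound, Set.ofPred_forall]
  refine isClosed_iInter fun f => isClosed_iInter fun hf => isClosed_iInter fun hfc =>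
    isClosed_iInter fun hf0 => ?_
  obtain ⟨M, hM⟩ := hf.bounded_above_of_compact_support hfc
  have hmap : ∀ x,
      ∫⁻ a, ENNReal.ofReal (f a) ∂ν.map (P x) = ENNReal.ofReal (∫ y, f (P x y) ∂ν) := fun x => by
      rw [lintegral_map hf.measurable.ennreal_ofReal (hPm x)]
      exact (ofReal_integral_eq_lintegral_ofReal
        ((integrable_const M).mono' (hf.measurable.comp (hPm x)).aestronglyMeasurable
          (ae_of_all _ fun _ => hM _)) (ae_of_all _ fun _ => hf0 _)).symm
  simp_rw [hmap]
  exact isClosed_le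
    (ENNReal.continuous_ofReal.comp (continuous_integral_comp_of_norm_le ν hPm hPc hf hM))
    continuous_const

end Pushforward

end MeasureTheory

open MeasureTheory

theorem stmt0_general (ν : Measure ℂ) [IsProbabilityMeasure ν]
    (q : ℝ) (hq : 1 < q) (C : ℝ) :
    IsClosed {z : ℂ | ‖z‖ = 1 ∧ ∃ g : ℝ → ℝ, (∀ x, 0 ≤ g x) ∧
      MemLp g (ENNReal.ofReal q) volume ∧
      ν.map (fun w => (z * (starRingEnd ℂ) w).re) =
        volume.withDensity (fun x => ENNReal.ofReal (g x)) ∧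
      eLpNorm g (ENNReal.ofReal q) volume ≤ ENNReal.ofReal C} := by
  have hpq : q.conjExponent.HolderConjugate q := (Real.HolderConjugate.conjExponent hq).symm
  have hF : {z : ℂ | ‖z‖ = 1 ∧ HasLpDensity (ν.map fun w => (z * starRingEnd ℂ w).re) volume q C}
      = {z : ℂ | ‖z‖ = 1} ∩
        {z | TestingBound (ν.map fun w => (z * starRingEnd ℂ w).re) volume q.conjExponent C} :=
    Set.ext fun _ => and_congr_right fun _ => hasLpDensity_iff_testingBound hpq
  exact hF ▸ (isClosed_eq continuous_norm continuous_const).inter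
    (isClosed_setOf_testingBound_map ν (fun _ => by fun_prop) (fun _ => by fun_prop) _ _ _)

/-- For a compactly supported Borel probability measure `ν` on `ℂ`, `1 < q` and `C > 0`,
the set of `z` on the unit circle such that the projection `P_z ν` is absolutely continuous
with density in `L^q(ℝ)` of norm at most `C` is closed. -/
theorem stmt0 (ν : Measure ℂ) [IsProbabilityMeasure ν]
    (hν : ∃ K : Set ℂ, IsCompact K ∧ ν Kᶜ = 0)
    (q : ℝ) (hq : 1 < q) (C : ℝ) (hC : 0 < C) :
    IsClosed {z : ℂ | ‖z‖ = 1 ∧ ∃ g : ℝ → ℝ, (∀ x, 0 ≤ g x) ∧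
      MemLp g (ENNReal.ofReal q) volume ∧
      ν.map (fun w => (z * (starRingEnd ℂ) w).re) =
        volume.withDensity (fun x => ENNReal.ofReal (g x)) ∧
      eLpNorm g (ENNReal.ofReal q) volume ≤ ENNReal.ofReal C} :=
  stmt0_general ν q hq C
end

section
/- Let α ∈ S with arg α ∉ πℚ and let V be a nonempty open subset of the unit circle S. Then there exists N ≥ 1 such that for every z ∈ S there exists 1 ≤ k ≤ N with α^{-k} z ∈ V. -/
/-!
The powers of `α` are dense in the circle because `arg α / π` is irrational, and in a compact
group the positive powers of an element already have the same closure as all its integer powers.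
So the open sets `{z | α⁻ᵏ z ∈ V}`, `k ≥ 1`, cover the circle, and compactness leaves finitely
many of them.
-/

open Complex Set Real

theorem exists_pow_mul_mem_of_denseRange_zpow {G : Type*} [Group G] [TopologicalSpace G]
    [IsTopologicalGroup G] [CompactSpace G] {g : G} (hg : DenseRange (g ^ · : ℤ → G))
    {V : Set G} (hVo : IsOpen V) (hVne : V.Nonempty) :
    ∃ N : ℕ, 1 ≤ N ∧ ∀ x : G, ∃ k : ℕ, 1 ≤ k ∧ k ≤ N ∧ g ^ k * x ∈ V := by
  have hcover : (univ : Set G) ⊆ ⋃ k : ℕ, (g ^ (k + 1) * ·) ⁻¹' V := by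
    intro x _
    obtain ⟨v, hv⟩ := hVne
    obtain ⟨k, hk⟩ := (denseRange_zpow_iff_pow.mp hg).exists_mem_open
      (hVo.preimage (by fun_prop : Continuous fun y => g * y * x))
      ⟨g⁻¹ * v * x⁻¹, by simpa [mul_assoc] using hv⟩
    exact mem_iUnion.mpr ⟨k, by simpa [pow_succ', mul_assoc] using hk⟩
  obtain ⟨t, ht⟩ := isCompact_univ.elim_finite_subcover _
    (fun k => hVo.preimage (continuous_const_mul _)) hcover
  refine ⟨t.sup id + 1, le_add_self, fun x => ?_⟩
  obtain ⟨k, hkt, hk⟩ := mem_iUnion₂.mp (ht (mem_univ x))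
  exact ⟨k + 1, le_add_self, Nat.succ_le_succ (Finset.le_sup (f := id) hkt), hk⟩

theorem Circle.denseRange_zpow_exp {θ : ℝ} (hθ : Irrational (θ / (2 * π))) :
    DenseRange (Circle.exp θ ^ · : ℤ → Circle) := by
  have := AddCircle.homeomorphCircle'.surjective.denseRange.comp
    (AddCircle.denseRange_zsmul_coe_iff.mpr hθ) AddCircle.homeomorphCircle'.continuous
  convert this using 2 with n
  rw [Function.comp_apply, ← AddCircle.coe_zsmul, AddCircle.homeomorphCircle'_apply_mk,
    Circle.exp_zsmul]

theorem stmt9_general (α : ℂ) (hα : ‖α‖ = 1)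
    (harg : ∀ s : ℚ, Complex.arg α ≠ (s : ℝ) * Real.pi)
    (V : Set ℂ)
    (hVopen : ∃ U : Set ℂ, IsOpen U ∧ V = U ∩ {z : ℂ | ‖z‖ = 1})
    (hVne : V.Nonempty) :
    ∃ N : ℕ, 1 ≤ N ∧ ∀ z : ℂ, ‖z‖ = 1 →
      ∃ k : ℕ, 1 ≤ k ∧ k ≤ N ∧ α ^ (-(k : ℤ)) * z ∈ V := by
  let a : Circle := ⟨α, mem_sphere_zero_iff_norm.mpr hα⟩
  have hirr : Irrational (-arg α / (2 * π)) := by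
    rintro ⟨q, hq⟩
    refine harg (-2 * q) ?_
    push_cast
    field_simp at hq
    linarith
  have hdense : DenseRange (a⁻¹ ^ · : ℤ → Circle) := by
    rw [← Circle.exp_arg a, ← Circle.exp_neg]
    exact Circle.denseRange_zpow_exp hirr
  obtain ⟨U, hUo, rfl⟩ := hVopen
  obtain ⟨v, hvU, hv⟩ := hVne
  obtain ⟨N, hN, hcover⟩ := exists_pow_mul_mem_of_denseRange_zpow hdense
    (hUo.preimage continuous_subtype_val) ⟨⟨v, mem_sphere_zero_iff_norm.mpr hv⟩, hvU⟩
  refine ⟨N, hN, fun z hz => ?_⟩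
  obtain ⟨k, hk1, hkN, hk⟩ := hcover ⟨z, mem_sphere_zero_iff_norm.mpr hz⟩
  refine ⟨k, hk1, hkN, ?_, ?_⟩
  · rw [zpow_neg, zpow_natCast, ← inv_pow]
    exact hk
  · simp [hα, hz]

/-- If `α` is on the unit circle with `arg α ∉ πℚ` and `V` is a nonempty relatively open
subset of the unit circle `S`, then there is `N ≥ 1` such that for every `z ∈ S` some
`k` with `1 ≤ k ≤ N` has `α^{-k} z ∈ V`. -/
theorem stmt9 (α : ℂ) (hα : ‖α‖ = 1)
    (harg : ∀ s : ℚ, Complex.arg α ≠ (s : ℝ) * Real.pi)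
    (V : Set ℂ) (hVsub : V ⊆ {z : ℂ | ‖z‖ = 1})
    (hVopen : ∃ U : Set ℂ, IsOpen U ∧ V = U ∩ {z : ℂ | ‖z‖ = 1})
    (hVne : V.Nonempty) :
    ∃ N : ℕ, 1 ≤ N ∧ ∀ z : ℂ, ‖z‖ = 1 →
      ∃ k : ℕ, 1 ≤ k ∧ k ≤ N ∧ α ^ (-(k : ℤ)) * z ∈ V :=
  stmt9_general α hα harg V hVopen hVne
end

section
/- Let ν be a compactly supported Borel probability measure on ℂ, γ > 0 and C > 0. Assume that for every z ∈ S the projection P_z ν is absolutely continuous with density g_z ∈ H_γ(ℝ) and ‖g_z‖_{(γ)} ≤ C. Then for every γ' ∈ (0, γ), the map z ↦ g_z is continuous from S to (H_{γ'}(ℝ), ‖·‖_{(γ')}). -/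
/-!
The Fourier transform of the density `g z` is the characteristic function of the projection:
`𝓕 (g z) ξ = ∫ 𝐞 (-(Re (z * conj w) * ξ)) dν(w)`. Since `ν` lives on a ball of radius `M`, this
gives the Lipschitz bound `‖𝓕 (g z') ξ - 𝓕 (g z) ξ‖ ≤ 2πM|ξ|‖z' - z‖`. Split the `H_{γ'}`
integral of `g z' - g z` at the frequency `R`: for `|ξ| ≤ R` the Lipschitz bound makes it small
once `z'` is close to `z`, and for `|ξ| > R` the weight `(1 + ξ²)^γ'` is at most
`(1 + R²)^(γ' - γ) (1 + ξ²)^γ`, so that part is at most `4C²(1 + R²)^(γ' - γ)`. This direct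
estimate replaces the appeal to Rellich's theorem.
-/

open MeasureTheory FourierTransform Complex

/-- Membership in the `2,γ`-Sobolev space, for real-valued functions. -/
def MemSobolevR (γ : ℝ) (g : ℝ → ℝ) : Prop :=
  MemLp g 2 volume ∧
    Integrable (fun ξ : ℝ => ‖𝓕 (fun x => (g x : ℂ)) ξ‖ ^ 2 * (1 + ξ ^ 2) ^ γ) volume

/-- The `2,γ`-Sobolev norm, for real-valued functions. -/
noncomputable def sobolevNormR (γ : ℝ) (g : ℝ → ℝ) : ℝ :=
  (∫ ξ : ℝ, ‖𝓕 (fun x => (g x : ℂ)) ξ‖ ^ 2 * (1 + ξ ^ 2) ^ γ) ^ (1 / 2 : ℝ)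

open Filter Topology Set ComplexConjugate

lemma norm_fourierChar_sub_le (a b : ℝ) : ‖(𝐞 a : ℂ) - 𝐞 b‖ ≤ 2 * Real.pi * |a - b| := by
  have h : (𝐞 a : ℂ) = 𝐞 b * 𝐞 (a - b) := by
    rw [← Circle.coe_mul, ← AddChar.map_add_eq_mul, add_sub_cancel]
  rw [h, ← mul_sub_one, norm_mul, Circle.norm_coe, one_mul, Real.fourierChar_apply, mul_comm]
  refine Real.norm_exp_I_mul_ofReal_sub_one_le.trans_eq ?_
  rw [Real.norm_eq_abs, abs_mul, abs_of_pos Real.two_pi_pos]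

lemma norm_integral_fourierChar_sub_le {α : Type*} [MeasurableSpace α] {μ : Measure α}
    [IsProbabilityMeasure μ] {f f' : α → ℝ} (hf : AEMeasurable f μ) (hf' : AEMeasurable f' μ)
    {c : ℝ} (h : ∀ᵐ x ∂μ, |f x - f' x| ≤ c) :
    ‖∫ x, (𝐞 (f x) : ℂ) ∂μ - ∫ x, (𝐞 (f' x) : ℂ) ∂μ‖ ≤ 2 * Real.pi * c := by
  have hint : ∀ {u : α → ℝ}, AEMeasurable u μ → Integrable (fun x => (𝐞 (u x) : ℂ)) μ :=
    fun _ => Integrable.of_bound (by fun_prop) 1 (ae_of_all _ fun _ => (Circle.norm_coe _).le)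
  rw [← integral_sub (hint hf) (hint hf')]
  refine (norm_integral_le_of_norm_le_const ?_).trans_eq (by rw [probReal_univ, mul_one])
  filter_upwards [h] with x hx
  exact (norm_fourierChar_sub_le _ _).trans (by gcongr)

lemma integrable_of_map_eq_withDensity {α β : Type*} [MeasurableSpace α] [MeasurableSpace β]
    {μ : Measure α} [IsFiniteMeasure μ] {ν : Measure β} {f : α → β} {g : β → ℝ}
    (hg0 : 0 ≤ᵐ[ν] g) (hg : AEStronglyMeasurable g ν)
    (hd : μ.map f = ν.withDensity fun x => ENNReal.ofReal (g x)) : Integrable g ν := by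
  refine (lintegral_ofReal_ne_top_iff_integrable hg hg0).1 ?_
  rw [← setLIntegral_univ, ← withDensity_apply _ MeasurableSet.univ, ← hd]
  exact measure_ne_top _ _

lemma fourier_ofReal_eq_integral_withDensity {g : ℝ → ℝ} (hg0 : ∀ x, 0 ≤ g x)
    (hg : AEMeasurable g) (ξ : ℝ) :
    𝓕 (fun x => (g x : ℂ)) ξ =
      ∫ x, (𝐞 (-(x * ξ)) : ℂ) ∂(volume.withDensity fun x => ENNReal.ofReal (g x)) := by
  refine Eq.trans ?_ (integral_withDensity_eq_integral_smul₀ hg.real_toNNReal _).symm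
  rw [Real.fourier_real_eq]
  refine integral_congr_ae (ae_of_all _ fun x => ?_)
  simp only [NNReal.smul_def, Real.coe_toNNReal _ (hg0 x), Circle.smul_def, real_smul, smul_eq_mul]
  exact mul_comm _ _

lemma Real.fourier_sub {f h : ℝ → ℂ} (hf : Integrable f) (hh : Integrable h) :
    𝓕 (f - h) = 𝓕 f - 𝓕 h := by
  ext ξ
  simp only [Real.fourier_eq, Pi.sub_apply, smul_sub]
  exact integral_sub ((Real.fourierIntegral_convergent_iff ξ).2 hf)
    ((Real.fourierIntegral_convergent_iff ξ).2 hh)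

lemma fourier_ofReal_sub {g g' : ℝ → ℝ} (hg : Integrable g) (hg' : Integrable g') :
    𝓕 (fun x => ((g' x - g x : ℝ) : ℂ)) = 𝓕 (fun x => (g' x : ℂ)) - 𝓕 (fun x => (g x : ℂ)) := by
  push_cast
  exact Real.fourier_sub hg'.ofReal hg.ofReal

lemma norm_fourier_sub_le_of_map_eq_withDensity (ν : Measure ℂ) [IsProbabilityMeasure ν] {M : ℝ}
    (hM : ∀ᵐ w ∂ν, ‖w‖ ≤ M) {z z' : ℂ} {g g' : ℝ → ℝ} (hg0 : ∀ x, 0 ≤ g x)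
    (hg'0 : ∀ x, 0 ≤ g' x) (hg : AEMeasurable g) (hg' : AEMeasurable g')
    (hd : ν.map (fun w => (z * conj w).re) = volume.withDensity fun x => ENNReal.ofReal (g x))
    (hd' : ν.map (fun w => (z' * conj w).re) = volume.withDensity fun x => ENNReal.ofReal (g' x))
    (ξ : ℝ) :
    ‖𝓕 (fun x => (g' x : ℂ)) ξ - 𝓕 (fun x => (g x : ℂ)) ξ‖ ≤
      2 * Real.pi * (M * |ξ| * ‖z' - z‖) := by
  have hchar : Continuous fun x : ℝ => (𝐞 (-(x * ξ)) : ℂ) := by fun_prop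
  rw [fourier_ofReal_eq_integral_withDensity hg0 hg,
    fourier_ofReal_eq_integral_withDensity hg'0 hg', ← hd, ← hd', integral_map (by fun_prop) hchar.aestronglyMeasurable,
    integral_map (by fun_prop) hchar.aestronglyMeasurable]
  refine norm_integral_fourierChar_sub_le (by fun_prop) (by fun_prop) ?_
  filter_upwards [hM] with w hw
  calc |-((z' * conj w).re * ξ) - -((z * conj w).re * ξ)| = |((z' - z) * conj w).re| * |ξ| := by
        rw [← abs_mul, ← abs_neg]; congr 1; simp only [sub_mul, sub_re]; ring
    _ ≤ ‖z' - z‖ * M * |ξ| := by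
        gcongr
        refine (abs_re_le_norm _).trans ?_
        rw [norm_mul, norm_conj]
        gcongr
    _ = M * |ξ| * ‖z' - z‖ := by ring

lemma norm_sub_sq_mul_le {E : Type*} [SeminormedAddCommGroup E] (a b : E) {w : ℝ} (hw : 0 ≤ w) :
    ‖a - b‖ ^ 2 * w ≤ 2 * (‖a‖ ^ 2 * w) + 2 * (‖b‖ ^ 2 * w) := by
  have h : ‖a - b‖ ^ 2 ≤ 2 * ‖a‖ ^ 2 + 2 * ‖b‖ ^ 2 := by
    nlinarith [norm_sub_le a b, norm_nonneg (a - b), sq_nonneg (‖a‖ - ‖b‖)]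
  nlinarith

section WeightedSquare

variable {α : Type*} [MeasurableSpace α] {μ : Measure α} {F G : α → ℂ} {w : α → ℝ}

lemma Integrable.norm_sub_sq_mul (hw : ∀ x, 0 ≤ w x) (hFm : AEStronglyMeasurable F μ)
    (hGm : AEStronglyMeasurable G μ) (hwm : AEStronglyMeasurable w μ)
    (hF : Integrable (fun x => ‖F x‖ ^ 2 * w x) μ) (hG : Integrable (fun x => ‖G x‖ ^ 2 * w x) μ) :
    Integrable (fun x => ‖F x - G x‖ ^ 2 * w x) μ :=
  ((hF.const_mul 2).add (hG.const_mul 2)).mono' (by fun_prop) <| ae_of_all _ fun x => by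
    rw [Real.norm_of_nonneg (by have := hw x; positivity)]
    exact norm_sub_sq_mul_le _ _ (hw x)

lemma integral_norm_sub_sq_mul_le (hw : ∀ x, 0 ≤ w x)
    (hF : Integrable (fun x => ‖F x‖ ^ 2 * w x) μ) (hG : Integrable (fun x => ‖G x‖ ^ 2 * w x) μ) :
    ∫ x, ‖F x - G x‖ ^ 2 * w x ∂μ ≤
      2 * ∫ x, ‖F x‖ ^ 2 * w x ∂μ + 2 * ∫ x, ‖G x‖ ^ 2 * w x ∂μ := by
  rw [← integral_const_mul, ← integral_const_mul, ← integral_add (hF.const_mul 2) (hG.const_mul 2)]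
  exact integral_mono_of_nonneg (ae_of_all _ fun x => by have := hw x; positivity)
    ((hF.const_mul 2).add (hG.const_mul 2)) (ae_of_all _ fun x => norm_sub_sq_mul_le _ _ (hw x))

end WeightedSquare

lemma sobolevNormR_eq_sqrt (γ : ℝ) (g : ℝ → ℝ) :
    sobolevNormR γ g = √(∫ ξ : ℝ, ‖𝓕 (fun x => (g x : ℂ)) ξ‖ ^ 2 * (1 + ξ ^ 2) ^ γ) := by
  rw [sobolevNormR, Real.sqrt_eq_rpow]

lemma sobolevNormR_lt_iff {γ ε : ℝ} {g : ℝ → ℝ} (hε : 0 < ε) :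
    sobolevNormR γ g < ε ↔ ∫ ξ : ℝ, ‖𝓕 (fun x => (g x : ℂ)) ξ‖ ^ 2 * (1 + ξ ^ 2) ^ γ < ε ^ 2 := by
  rw [sobolevNormR_eq_sqrt, Real.sqrt_lt' hε]

lemma integral_le_sq_of_sobolevNormR_le {γ C : ℝ} {g : ℝ → ℝ} (h : sobolevNormR γ g ≤ C) :
    ∫ ξ : ℝ, ‖𝓕 (fun x => (g x : ℂ)) ξ‖ ^ 2 * (1 + ξ ^ 2) ^ γ ≤ C ^ 2 := by
  rw [sobolevNormR_eq_sqrt] at h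
  exact (Real.sqrt_le_iff.1 h).2

section SobolevSub

variable {γ : ℝ} {g g' : ℝ → ℝ}

lemma MemSobolevR.integrable_fourier_sub_sq_mul (hg : Integrable g) (hg' : Integrable g')
    (hmem : MemSobolevR γ g) (hmem' : MemSobolevR γ g') :
    Integrable fun ξ => ‖𝓕 (fun x => ((g' x - g x : ℝ) : ℂ)) ξ‖ ^ 2 * (1 + ξ ^ 2) ^ γ := by
  have hcont : ∀ {f : ℝ → ℝ}, Integrable f → Continuous (𝓕 fun x => (f x : ℂ)) := fun hf =>
    VectorFourier.fourierIntegral_continuous Real.continuous_fourierChar continuous_inner hf.ofReal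
  rw [fourier_ofReal_sub hg hg']
  exact Integrable.norm_sub_sq_mul (fun ξ => by positivity) (hcont hg').aestronglyMeasurable
    (hcont hg).aestronglyMeasurable ((by fun_prop : Continuous fun ξ : ℝ => 1 + ξ ^ 2).rpow_const
      fun ξ => Or.inl (by positivity)).aestronglyMeasurable hmem'.2 hmem.2

lemma integral_fourier_sub_sq_mul_le {C : ℝ} (hg : Integrable g) (hg' : Integrable g')
    (hmem : MemSobolevR γ g) (hmem' : MemSobolevR γ g') (hC : sobolevNormR γ g ≤ C)
    (hC' : sobolevNormR γ g' ≤ C) :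
    ∫ ξ, ‖𝓕 (fun x => ((g' x - g x : ℝ) : ℂ)) ξ‖ ^ 2 * (1 + ξ ^ 2) ^ γ ≤ 4 * C ^ 2 := by
  rw [fourier_ofReal_sub hg hg']
  refine (integral_norm_sub_sq_mul_le (fun ξ => by positivity) hmem'.2 hmem.2).trans ?_
  linarith [integral_le_sq_of_sobolevNormR_le hC, integral_le_sq_of_sobolevNormR_le hC']

end SobolevSub

lemma norm_sq_mul_weight_le_indicator_add {γ γ' R A : ℝ} {a : ℂ} {ξ : ℝ} (hγ' : 0 ≤ γ')
    (hγ'γ : γ' ≤ γ) (hR : 0 ≤ R) (hA : |ξ| ≤ R → ‖a‖ ≤ A) :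
    ‖a‖ ^ 2 * (1 + ξ ^ 2) ^ γ' ≤
      (Icc (-R) R).indicator (fun _ => A ^ 2 * (1 + R ^ 2) ^ γ') ξ +
        (1 + R ^ 2) ^ (γ' - γ) * (‖a‖ ^ 2 * (1 + ξ ^ 2) ^ γ) := by
  by_cases hξ : |ξ| ≤ R
  · have hξ2 : ξ ^ 2 ≤ R ^ 2 := sq_le_sq' (abs_le.1 hξ).1 (abs_le.1 hξ).2
    rw [indicator_of_mem (show ξ ∈ Icc (-R) R from abs_le.1 hξ)]
    have hlow : ‖a‖ ^ 2 * (1 + ξ ^ 2) ^ γ' ≤ A ^ 2 * (1 + R ^ 2) ^ γ' := by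
      gcongr
      exact hA hξ
    have htail : 0 ≤ (1 + R ^ 2) ^ (γ' - γ) * (‖a‖ ^ 2 * (1 + ξ ^ 2) ^ γ) := by positivity
    linarith
  · have hRξ : R ^ 2 ≤ ξ ^ 2 := by
      rw [← sq_abs ξ]
      exact pow_le_pow_left₀ hR (not_le.1 hξ).le 2
    rw [indicator_of_notMem (show ξ ∉ Icc (-R) R from fun h => hξ (abs_le.2 h)), zero_add]
    calc ‖a‖ ^ 2 * (1 + ξ ^ 2) ^ γ'
        = (1 + ξ ^ 2) ^ (γ' - γ) * (‖a‖ ^ 2 * (1 + ξ ^ 2) ^ γ) := by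
          rw [mul_left_comm, ← Real.rpow_add (by positivity), sub_add_cancel]
      _ ≤ (1 + R ^ 2) ^ (γ' - γ) * (‖a‖ ^ 2 * (1 + ξ ^ 2) ^ γ) := by
          refine mul_le_mul_of_nonneg_right ?_ (by positivity)
          exact Real.rpow_le_rpow_of_nonpos (by positivity) (by linarith) (by linarith)

lemma integral_norm_sq_mul_weight_le {F : ℝ → ℂ} {γ γ' R A : ℝ} (hγ' : 0 ≤ γ') (hγ'γ : γ' ≤ γ)
    (hR : 0 ≤ R) (hF : Integrable (fun ξ => ‖F ξ‖ ^ 2 * (1 + ξ ^ 2) ^ γ))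
    (hA : ∀ ξ, |ξ| ≤ R → ‖F ξ‖ ≤ A) :
    ∫ ξ, ‖F ξ‖ ^ 2 * (1 + ξ ^ 2) ^ γ' ≤
      2 * R * (A ^ 2 * (1 + R ^ 2) ^ γ') +
        (1 + R ^ 2) ^ (γ' - γ) * ∫ ξ, ‖F ξ‖ ^ 2 * (1 + ξ ^ 2) ^ γ := by
  have hlow : Integrable ((Icc (-R) R).indicator fun _ => A ^ 2 * (1 + R ^ 2) ^ γ') :=
    (integrableOn_const measure_Icc_lt_top.ne).integrable_indicator measurableSet_Icc
  calc ∫ ξ, ‖F ξ‖ ^ 2 * (1 + ξ ^ 2) ^ γ'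
      ≤ ∫ ξ, ((Icc (-R) R).indicator (fun _ => A ^ 2 * (1 + R ^ 2) ^ γ') ξ +
          (1 + R ^ 2) ^ (γ' - γ) * (‖F ξ‖ ^ 2 * (1 + ξ ^ 2) ^ γ)) :=
        integral_mono_of_nonneg (ae_of_all _ fun ξ => by positivity) (hlow.add (hF.const_mul _))
          (ae_of_all _ fun ξ => norm_sq_mul_weight_le_indicator_add hγ' hγ'γ hR (hA ξ))
    _ = _ := by
        rw [integral_add hlow (hF.const_mul _), integral_indicator_const _ measurableSet_Icc,
          integral_const_mul, Real.volume_real_Icc, smul_eq_mul, sub_neg_eq_add,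
          max_eq_left (by linarith), two_mul]

lemma tendsto_one_add_sq_rpow_atTop_zero {s : ℝ} (hs : s < 0) :
    Tendsto (fun R : ℝ => (1 + R ^ 2) ^ s) atTop (𝓝 0) := by
  have := (tendsto_rpow_neg_atTop (neg_pos.2 hs)).comp
    (tendsto_atTop_add_const_left _ 1 (tendsto_pow_atTop two_ne_zero))
  simpa only [neg_neg, Function.comp_def] using this

lemma exists_pos_forall_integral_norm_sq_mul_weight_lt {γ γ' B ε : ℝ} (hγ' : 0 ≤ γ')
    (hγ'γ : γ' < γ) (hε : 0 < ε) :
    ∃ η > 0, ∀ F : ℝ → ℂ, Integrable (fun ξ => ‖F ξ‖ ^ 2 * (1 + ξ ^ 2) ^ γ) →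
      ∫ ξ, ‖F ξ‖ ^ 2 * (1 + ξ ^ 2) ^ γ ≤ B → (∀ ξ, ‖F ξ‖ ≤ η * |ξ|) →
        ∫ ξ, ‖F ξ‖ ^ 2 * (1 + ξ ^ 2) ^ γ' < ε := by
  obtain ⟨R, hRtail, hR⟩ := (((tendsto_one_add_sq_rpow_atTop_zero (sub_neg.2 hγ'γ)).mul_const B
    |>.eventually (gt_mem_nhds (by simpa using half_pos hε : 0 * B < ε / 2))).and
      (eventually_ge_atTop 0)).exists
  have hlow : Tendsto (fun η : ℝ => 2 * R * ((η * R) ^ 2 * (1 + R ^ 2) ^ γ')) (𝓝[>] 0) (𝓝 0) := by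
    have : Continuous (fun η : ℝ => 2 * R * ((η * R) ^ 2 * (1 + R ^ 2) ^ γ')) := by fun_prop
    simpa using (this.tendsto 0).mono_left nhdsWithin_le_nhds
  obtain ⟨η, hηlow, hη⟩ :=
    ((hlow.eventually (gt_mem_nhds (half_pos hε))).and self_mem_nhdsWithin).exists
  refine ⟨η, hη, fun F hF hFB hFη => ?_⟩
  have hA : ∀ ξ, |ξ| ≤ R → ‖F ξ‖ ≤ η * R := fun ξ hξ =>
    (hFη ξ).trans (mul_le_mul_of_nonneg_left hξ hη.le)
  have htail : (1 + R ^ 2) ^ (γ' - γ) * ∫ ξ, ‖F ξ‖ ^ 2 * (1 + ξ ^ 2) ^ γ < ε / 2 :=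
    (mul_le_mul_of_nonneg_left hFB (by positivity)).trans_lt hRtail
  linarith [integral_norm_sq_mul_weight_le hγ' hγ'γ.le hR hF hA]

theorem stmt10_general (ν : Measure ℂ) [IsProbabilityMeasure ν]
    (hν : ∃ K : Set ℂ, IsCompact K ∧ ν Kᶜ = 0)
    (γ C : ℝ)
    (g : ℂ → ℝ → ℝ) (hg0 : ∀ z, ‖z‖ = 1 → ∀ x, 0 ≤ g z x)
    (hmem : ∀ z, ‖z‖ = 1 → MemSobolevR γ (g z))
    (hdens : ∀ z, ‖z‖ = 1 →
      ν.map (fun w => (z * (starRingEnd ℂ) w).re) =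
        volume.withDensity (fun x => ENNReal.ofReal (g z x)))
    (hbd : ∀ z, ‖z‖ = 1 → sobolevNormR γ (g z) ≤ C) :
    ∀ γ' : ℝ, 0 < γ' → γ' < γ →
      ∀ z : ℂ, ‖z‖ = 1 → ∀ ε : ℝ, 0 < ε → ∃ δ : ℝ, 0 < δ ∧
        ∀ z' : ℂ, ‖z'‖ = 1 → ‖z' - z‖ < δ →
          sobolevNormR γ' (fun x => g z' x - g z x) < ε := by
  intro γ' hγ' hγ'γ z hz ε hε
  obtain ⟨K, hK, hνK⟩ := hν
  obtain ⟨M, hM, hKM⟩ := hK.isBounded.exists_pos_norm_le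
  have hνM : ∀ᵐ w ∂ν, ‖w‖ ≤ M := measure_mono_null (fun w hw hwK => hw (hKM w hwK)) hνK
  have hint : ∀ y, ‖y‖ = 1 → Integrable (g y) := fun y hy =>
    integrable_of_map_eq_withDensity (ae_of_all _ (hg0 y hy)) (hmem y hy).1.1 (hdens y hy)
  obtain ⟨η, hη, hsmall⟩ := exists_pos_forall_integral_norm_sq_mul_weight_lt (B := 4 * C ^ 2)
    hγ'.le hγ'γ (pow_pos hε 2)
  refine ⟨η / (2 * Real.pi * M), by positivity, fun z' hz' hzz' => ?_⟩
  rw [sobolevNormR_lt_iff hε]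
  refine hsmall _
    ((hmem z hz).integrable_fourier_sub_sq_mul (hint z hz) (hint z' hz') (hmem z' hz'))
    (integral_fourier_sub_sq_mul_le (hint z hz) (hint z' hz') (hmem z hz) (hmem z' hz')
      (hbd z hz) (hbd z' hz')) fun ξ => ?_
  have hδ : 2 * Real.pi * M * ‖z' - z‖ ≤ η := ((lt_div_iff₀' (by positivity)).1 hzz').le
  calc _ = ‖𝓕 (fun x => (g z' x : ℂ)) ξ - 𝓕 (fun x => (g z x : ℂ)) ξ‖ := by
        rw [fourier_ofReal_sub (hint z hz) (hint z' hz'), Pi.sub_apply]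
    _ ≤ 2 * Real.pi * (M * |ξ| * ‖z' - z‖) :=
        norm_fourier_sub_le_of_map_eq_withDensity ν hνM (hg0 z hz) (hg0 z' hz')
          (hmem z hz).1.1.aemeasurable (hmem z' hz').1.1.aemeasurable (hdens z hz) (hdens z' hz') ξ
    _ = 2 * Real.pi * M * ‖z' - z‖ * |ξ| := by ring
    _ ≤ η * |ξ| := by gcongr

/-- Let `ν` be a compactly supported Borel probability measure on `ℂ`, `γ, C > 0`.  If for
every `z` on the unit circle the projection `P_z ν` has a density `g z ∈ H_γ(ℝ)` with
`‖g z‖_{(γ)} ≤ C`, then for every `γ' ∈ (0, γ)` the map `z ↦ g z` is continuous from the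
circle to `(H_{γ'}(ℝ), ‖·‖_{(γ')})`. -/
theorem stmt10 (ν : Measure ℂ) [IsProbabilityMeasure ν]
    (hν : ∃ K : Set ℂ, IsCompact K ∧ ν Kᶜ = 0)
    (γ C : ℝ) (hγ : 0 < γ) (hC : 0 < C)
    (g : ℂ → ℝ → ℝ) (hg0 : ∀ z, ‖z‖ = 1 → ∀ x, 0 ≤ g z x)
    (hmem : ∀ z, ‖z‖ = 1 → MemSobolevR γ (g z))
    (hdens : ∀ z, ‖z‖ = 1 →
      ν.map (fun w => (z * (starRingEnd ℂ) w).re) =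
        volume.withDensity (fun x => ENNReal.ofReal (g z x)))
    (hbd : ∀ z, ‖z‖ = 1 → sobolevNormR γ (g z) ≤ C) :
    ∀ γ' : ℝ, 0 < γ' → γ' < γ →
      ∀ z : ℂ, ‖z‖ = 1 → ∀ ε : ℝ, 0 < ε → ∃ δ : ℝ, 0 < δ ∧
        ∀ z' : ℂ, ‖z'‖ = 1 → ‖z' - z‖ < δ →
          sobolevNormR γ' (fun x => g z' x - g z x) < ε :=
  stmt10_general ν hν γ C g hg0 hmem hdens hbd
end
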